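/- arXiv:2602.23059 — 2 statements merged into one kernel-verified Lean document; each statement's English description precedes it below -/
import Mathlib

section
/- Let π ∈ ℝⁿ be a positive probability vector, let M ∈ {0,1}^{n×n} be irreducible, symmetric with M_{ii} = 1 for all i, let K ∈ ℝ^{n²×n²} be the commutation matrix, let s_M be the number of ones in M, let y_M = (s_M − n)/2 + n, and let Π ∈ ℝ^{n²×y_M} be the upper-triangular selection operator determined by M. Then the matrix (D_π̂ ⊗ D_π̂⁻¹)(I + K)Π ∈ ℝ^{n²×y_M} has full column rank y_M; equivalently, the linear map y ↦ (D_π̂ ⊗ D_π̂⁻¹)(I + K)Π y is injective on ℝ^{y_M}. -/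
open Matrix BigOperators
open scoped Classical

/-- Index set for the upper-triangular nonzero positions of the pattern `M`
(including the diagonal); it enumerates `Ω_triu(M)` and has cardinality `y_M`. -/
def triuIdx (n : ℕ) (M : Matrix (Fin n) (Fin n) ℝ) : Type :=
  {p : Fin n × Fin n // p.1 ≤ p.2 ∧ M p.1 p.2 = 1}

noncomputable instance (n : ℕ) (M : Matrix (Fin n) (Fin n) ℝ) : Fintype (triuIdx n M) :=
  Subtype.fintype _

/-- The upper-triangular selection operator `Π` determined by `M`: the row indexed by
the vec-position `(j, i)` of entry `(i,j)` has entry `1` in column `k = (i,j)` when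
`i < j`, entry `1/2` when `i = j`, and `0` otherwise. -/
noncomputable def selOp (n : ℕ) (M : Matrix (Fin n) (Fin n) ℝ) :
    Matrix (Fin n × Fin n) (triuIdx n M) ℝ :=
  fun r k =>
    if r.2 = k.1.1 ∧ r.1 = k.1.2 then (if k.1.1 = k.1.2 then 1 / 2 else 1) else 0

/-! `D_π̂ ⊗ D_π̂⁻¹` is diagonal with nonzero entries, hence invertible, so it suffices that
`(I + K) Π` is injective. For `k = (i, j)` with `i ≤ j`, `Π` writes `y k` (halved when `i = j`)
into the vec-position of entry `(i, j)` and zero into that of every entry below the diagonal,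
while `K` swaps the vec-positions of `(i, j)` and `(j, i)`. So `(I + K) Π y` holds `y k + 0` at
the position of `(i, j)` off the diagonal and `y k / 2 + y k / 2` on it: reading these
positions is a left inverse of `(I + K) Π`. -/

namespace Matrix

variable {m n R : Type*} [Fintype n]

theorem rank_eq_card_width_of_mulVec_injective [Field R] {A : Matrix m n R}
    (h : Function.Injective A.mulVec) : A.rank = Fintype.card n := by
  rw [rank, LinearMap.finrank_range_of_inj (f := A.mulVecLin) h,
    Module.finrank_fintype_fun_eq_card]

theorem mulVec_eq_swap_of_commutation [CommSemiring R] {K : Matrix (n × n) (n × n) R}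
    (hK : ∀ Y : Matrix n n R, K *ᵥ (fun p => Y p.2 p.1) = fun p => Yᵀ p.2 p.1)
    (w : n × n → R) : K *ᵥ w = fun p => w p.swap :=
  hK fun i j => w (j, i)

end Matrix

section SelectionOperator

variable {n : ℕ} {M : Matrix (Fin n) (Fin n) ℝ}

theorem selOp_mulVec_apply_swap (y : triuIdx n M → ℝ) (k : triuIdx n M) :
    (selOp n M *ᵥ y) k.1.swap = (if k.1.1 = k.1.2 then 1 / 2 else 1) * y k := by
  refine (Fintype.sum_eq_single k fun k' hk' => ?_).trans ?_
  · have hne : ¬(k.1.1 = k'.1.1 ∧ k.1.2 = k'.1.2) := fun h =>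
      hk' (Subtype.ext (Prod.ext h.1.symm h.2.symm))
    simp [selOp, hne]
  · simp [selOp]

theorem selOp_mulVec_apply_of_lt (y : triuIdx n M → ℝ) {i j : Fin n} (hij : i < j) :
    (selOp n M *ᵥ y) (i, j) = 0 :=
  Finset.sum_eq_zero fun k _ => by
    have hne : ¬(j = k.1.1 ∧ i = k.1.2) := by
      rintro ⟨rfl, rfl⟩
      exact hij.not_ge k.2.1
    simp [selOp, hne]

theorem selOp_mulVec_apply_swap_add_apply (y : triuIdx n M → ℝ) (k : triuIdx n M) :
    (selOp n M *ᵥ y) k.1.swap + (selOp n M *ᵥ y) k.1 = y k := by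
  rcases k.2.1.eq_or_lt with heq | hlt
  · have hswap : k.1.swap = k.1 := Prod.ext heq.symm heq
    rw [← congrArg (selOp n M *ᵥ y) hswap, selOp_mulVec_apply_swap, if_pos heq]
    ring
  · rw [selOp_mulVec_apply_swap, if_neg hlt.ne,
      (selOp_mulVec_apply_of_lt y hlt : (selOp n M *ᵥ y) k.1 = 0)]
    ring

theorem one_add_mul_selOp_leftInverse {K : Matrix (Fin n × Fin n) (Fin n × Fin n) ℝ}
    (hK : ∀ Y : Matrix (Fin n) (Fin n) ℝ,
      K *ᵥ (fun p => Y p.2 p.1) = fun p => Yᵀ p.2 p.1) :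
    Function.LeftInverse (fun v k => v k.1.swap) ((1 + K) * selOp n M).mulVec := fun y => by
  funext k
  rw [← mulVec_mulVec, add_mulVec, one_mulVec, mulVec_eq_swap_of_commutation hK]
  exact selOp_mulVec_apply_swap_add_apply y k

end SelectionOperator

theorem kroneckerMap_diagonal_sqrt_inv_mulVec_injective {n : ℕ} {piv : Fin n → ℝ}
    (hpos : ∀ i, 0 < piv i) :
    Function.Injective (kroneckerMap (· * ·) (diagonal fun i => Real.sqrt (piv i))
      (diagonal fun i => (Real.sqrt (piv i))⁻¹)).mulVec := by
  have hsqrt (i : Fin n) : Real.sqrt (piv i) ≠ 0 := (Real.sqrt_pos.mpr (hpos i)).ne'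
  rw [diagonal_kronecker_diagonal, mulVec_injective_iff_isUnit, isUnit_diagonal,
    Pi.isUnit_iff]
  exact fun p => (mul_ne_zero (hsqrt p.1) (inv_ne_zero (hsqrt p.2))).isUnit

theorem selection_operator_full_column_rank_general
    (n : ℕ) (piv : Fin n → ℝ)
    (hpos : ∀ i, 0 < piv i)
    (M : Matrix (Fin n) (Fin n) ℝ)
    (K : Matrix (Fin n × Fin n) (Fin n × Fin n) ℝ)
    (hK : ∀ Y : Matrix (Fin n) (Fin n) ℝ,
      K.mulVec (fun p => Y p.2 p.1) = (fun p => Yᵀ p.2 p.1)) :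
    (Matrix.kroneckerMap (· * ·)
        (Matrix.diagonal fun i => Real.sqrt (piv i))
        (Matrix.diagonal fun i => (Real.sqrt (piv i))⁻¹)
      * (1 + K) * selOp n M).rank = Fintype.card (triuIdx n M) ∧
    Function.Injective (fun y : triuIdx n M → ℝ =>
      (Matrix.kroneckerMap (· * ·)
          (Matrix.diagonal fun i => Real.sqrt (piv i))
          (Matrix.diagonal fun i => (Real.sqrt (piv i))⁻¹)
        * (1 + K) * selOp n M).mulVec y) := by
  have hinj : Function.Injective (kroneckerMap (· * ·) (diagonal fun i => Real.sqrt (piv i))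
      (diagonal fun i => (Real.sqrt (piv i))⁻¹) * (1 + K) * selOp n M).mulVec := by
    rw [Matrix.mul_assoc]
    intro y₁ y₂ h
    rw [← mulVec_mulVec y₁, ← mulVec_mulVec y₂] at h
    exact (one_add_mul_selOp_leftInverse hK).injective
      (kroneckerMap_diagonal_sqrt_inv_mulVec_injective hpos h)
  exact ⟨rank_eq_card_width_of_mulVec_injective hinj, hinj⟩

/-- For a positive probability vector `π` and an irreducible symmetric
pattern `M` with unit diagonal, the matrix `(D_π̂ ⊗ D_π̂⁻¹)(I + K)Π` has full column
rank `y_M`; equivalently `y ↦ (D_π̂ ⊗ D_π̂⁻¹)(I + K)Π y` is injective. -/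
theorem selection_operator_full_column_rank
    (n : ℕ) (piv : Fin n → ℝ)
    (hpos : ∀ i, 0 < piv i) (hsum : ∑ i, piv i = 1)
    (M : Matrix (Fin n) (Fin n) ℝ)
    (hM01 : ∀ i j, M i j = 0 ∨ M i j = 1)
    (hMirr : ∀ i j, ∃ k : ℕ, 0 < (M ^ k) i j)
    (hMsymm : M.IsSymm)
    (hMdiag : ∀ i, M i i = 1)
    (K : Matrix (Fin n × Fin n) (Fin n × Fin n) ℝ)
    (hK : ∀ Y : Matrix (Fin n) (Fin n) ℝ,
      K.mulVec (fun p => Y p.2 p.1) = (fun p => Yᵀ p.2 p.1)) :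
    (Matrix.kroneckerMap (· * ·)
        (Matrix.diagonal fun i => Real.sqrt (piv i))
        (Matrix.diagonal fun i => (Real.sqrt (piv i))⁻¹)
      * (1 + K) * selOp n M).rank = Fintype.card (triuIdx n M) ∧
    Function.Injective (fun y : triuIdx n M → ℝ =>
      (Matrix.kroneckerMap (· * ·)
          (Matrix.diagonal fun i => Real.sqrt (piv i))
          (Matrix.diagonal fun i => (Real.sqrt (piv i))⁻¹)
        * (1 + K) * selOp n M).mulVec y) :=
  selection_operator_full_column_rank_general n piv hpos M K hK
end

section
/- Let π ∈ ℝⁿ be a positive probability vector, let M ∈ {0,1}^{n×n} be irreducible, symmetric with M_{ii} = 1 for all i, let K be the commutation matrix, and let Π ∈ ℝ^{n²×y_M} be the upper-triangular selection operator determined by M, with y_M = (s_M − n)/2 + n. Then the matrix Q = ((D_π̂ ⊗ D_π̂⁻¹)(I + K)Π)ᵀ (D_π̂ ⊗ D_π̂⁻¹)(I + K)Π ∈ ℝ^{y_M×y_M} is symmetric positive definite; consequently the quadratic objective y ↦ ½ yᵀ Q y + cᵀ y is strongly convex on ℝ^{y_M} for any c ∈ ℝ^{y_M}. -/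
open Matrix BigOperators
open scoped Classical

/-! Write `A = D (I + K) Π` with `D = D_π̂ ⊗ D_π̂⁻¹`. Since `π > 0`, `D` is an invertible diagonal
matrix. The factor `(I + K) Π` has a left inverse: reading `(I + K) Π y` at the transposed
position `(j, i)` of an index `(i, j)` with `i ≤ j` returns `y (i, j)`, because `Π y` vanishes
at `(i, j)` for `i < j` and `I + K` doubles the `1/2` that `Π` puts on it. So `A` is injective
and `Q = AᵀA` is positive definite; in finite dimension injectivity also gives `‖y‖ ≤ C ‖A y‖`,
and then `y ↦ ½ yᵀQy + cᵀy` is strongly convex with modulus `1 / C²`, since its convexity gap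
along a segment is exactly `½ t (1 - t) (x - z)ᵀQ(x - z)`. -/

/-- The vectorization operator: stacks the columns of a matrix. -/
def vecOp {n : ℕ} (Y : Matrix (Fin n) (Fin n) ℝ) : Fin n × Fin n → ℝ :=
  fun p => Y p.2 p.1

section Quadratic

variable {ι : Type*} [Fintype ι]

theorem dotProduct_mulVec_convex_combination (Q : Matrix ι ι ℝ) (x z : ι → ℝ) (t : ℝ) :
    (t • x + (1 - t) • z) ⬝ᵥ Q *ᵥ (t • x + (1 - t) • z) =
      t * (x ⬝ᵥ Q *ᵥ x) + (1 - t) * (z ⬝ᵥ Q *ᵥ z) - t * (1 - t) * ((x - z) ⬝ᵥ Q *ᵥ (x - z)) := by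
  simp only [mulVec_add, mulVec_sub, mulVec_smul, dotProduct_add, add_dotProduct,
    dotProduct_sub, sub_dotProduct, smul_dotProduct, dotProduct_smul, smul_eq_mul]
  ring

theorem exists_pos_mul_sum_sq_le_of_injective {m : Type*} [Fintype m]
    {A : Matrix m ι ℝ} (hA : Function.Injective A.mulVec) :
    ∃ c : ℝ, 0 < c ∧ ∀ v : ι → ℝ, c * ∑ i, v i ^ 2 ≤ v ⬝ᵥ (Aᵀ * A) *ᵥ v := by
  obtain ⟨K, hK, hanti⟩ := (toEuclideanLin A).injective_iff_antilipschitz.mp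
    fun a b h => WithLp.ofLp_injective 2 (hA (by simpa using congrArg WithLp.ofLp h))
  refine ⟨(K : ℝ)⁻¹ ^ 2, by positivity, fun v => ?_⟩
  have hbound : ‖WithLp.toLp 2 v‖ ≤ K * ‖WithLp.toLp 2 (A *ᵥ v)‖ :=
    ZeroHomClass.bound_of_antilipschitz (toEuclideanLin A) hanti (WithLp.toLp 2 v)
  calc (K : ℝ)⁻¹ ^ 2 * ∑ i, v i ^ 2
      = ((K : ℝ)⁻¹ * ‖WithLp.toLp 2 v‖) ^ 2 := by
        rw [mul_pow, EuclideanSpace.real_norm_sq_eq]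
    _ ≤ ‖WithLp.toLp 2 (A *ᵥ v)‖ ^ 2 := by
        gcongr
        rwa [inv_mul_le_iff₀ (by positivity)]
    _ = v ⬝ᵥ (Aᵀ * A) *ᵥ v := by
        rw [EuclideanSpace.real_norm_sq_eq, ← mulVec_mulVec, dotProduct_mulVec, vecMul_transpose]
        simp [dotProduct, sq]

theorem quadratic_strong_convexity {Q : Matrix ι ι ℝ} {m : ℝ}
    (hQ : ∀ v : ι → ℝ, m * ∑ i, v i ^ 2 ≤ v ⬝ᵥ Q *ᵥ v) (c x z : ι → ℝ) {t : ℝ}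
    (ht : t ∈ Set.Icc (0 : ℝ) 1) :
    (1 / 2) * ((t • x + (1 - t) • z) ⬝ᵥ Q.mulVec (t • x + (1 - t) • z)) +
          c ⬝ᵥ (t • x + (1 - t) • z)
        ≤ t * ((1 / 2) * (x ⬝ᵥ Q.mulVec x) + c ⬝ᵥ x) +
            (1 - t) * ((1 / 2) * (z ⬝ᵥ Q.mulVec z) + c ⬝ᵥ z) -
            m / 2 * (t * (1 - t)) * ∑ k, (x k - z k) ^ 2 := by
  have hlin : c ⬝ᵥ (t • x + (1 - t) • z) = t * (c ⬝ᵥ x) + (1 - t) * (c ⬝ᵥ z) := by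
    simp only [dotProduct_add, dotProduct_smul, smul_eq_mul]
  have hgap : t * (1 - t) * (m * ∑ k, (x k - z k) ^ 2) ≤
      t * (1 - t) * ((x - z) ⬝ᵥ Q *ᵥ (x - z)) :=
    mul_le_mul_of_nonneg_left (hQ (x - z)) (mul_nonneg ht.1 (sub_nonneg.mpr ht.2))
  rw [dotProduct_mulVec_convex_combination, hlin]
  linarith

end Quadratic

theorem injective_mulVec_kronecker_diagonal {𝕜 ι κ : Type*} [Field 𝕜] [Fintype ι] [Fintype κ]
    [DecidableEq ι] [DecidableEq κ] {d : ι → 𝕜} {e : κ → 𝕜} (hd : ∀ i, d i ≠ 0)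
    (he : ∀ j, e j ≠ 0) :
    Function.Injective (kroneckerMap (· * ·) (diagonal d) (diagonal e)).mulVec := by
  rw [diagonal_kronecker_diagonal, mulVec_injective_iff_isUnit, isUnit_diagonal, Pi.isUnit_iff]
  exact fun p => (mul_ne_zero (hd p.1) (he p.2)).isUnit

section Selection

variable {n : ℕ} {M : Matrix (Fin n) (Fin n) ℝ}

theorem mulVec_eq_comp_swap_of_commutation {K : Matrix (Fin n × Fin n) (Fin n × Fin n) ℝ}
    (hK : ∀ Z : Matrix (Fin n) (Fin n) ℝ, K.mulVec (vecOp Z) = vecOp Zᵀ)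
    (w : Fin n × Fin n → ℝ) : K *ᵥ w = w ∘ Prod.swap :=
  hK (Matrix.of fun i j => w (j, i))

theorem one_add_mulVec_selOp_mulVec_apply_swap {K : Matrix (Fin n × Fin n) (Fin n × Fin n) ℝ}
    (hK : ∀ Z : Matrix (Fin n) (Fin n) ℝ, K.mulVec (vecOp Z) = vecOp Zᵀ)
    (y : triuIdx n M → ℝ) (k : triuIdx n M) :
    ((1 + K) *ᵥ (selOp n M *ᵥ y)) k.1.swap = y k := by
  rw [add_mulVec, one_mulVec, mulVec_eq_comp_swap_of_commutation hK]
  simp only [Pi.add_apply, Function.comp_apply, Prod.swap_swap]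
  rcases k.2.1.lt_or_eq with hlt | heq
  · rw [selOp_mulVec_apply_swap, selOp_mulVec_apply_of_lt y hlt, if_neg hlt.ne]
    ring
  · have hswap : k.1.swap = k.1 := Prod.ext heq.symm heq
    have hdiag := selOp_mulVec_apply_swap y k
    rw [hswap, if_pos heq] at hdiag
    rw [hswap, hdiag]
    ring

end Selection

theorem injective_mulVec_mul_selOp {n : ℕ} {M : Matrix (Fin n) (Fin n) ℝ}
    {D K : Matrix (Fin n × Fin n) (Fin n × Fin n) ℝ} (hD : Function.Injective D.mulVec)
    (hK : ∀ Z : Matrix (Fin n) (Fin n) ℝ, K.mulVec (vecOp Z) = vecOp Zᵀ) :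
    Function.Injective (D * (1 + K) * selOp n M).mulVec := by
  intro y y' h
  simp only [← mulVec_mulVec] at h
  funext k
  rw [← one_add_mulVec_selOp_mulVec_apply_swap hK y k,
    ← one_add_mulVec_selOp_mulVec_apply_swap hK y' k, hD h]

theorem qp_hessian_positive_definite_general
    (n : ℕ) (piv : Fin n → ℝ)
    (hpos : ∀ i, 0 < piv i)
    (M : Matrix (Fin n) (Fin n) ℝ)
    (K : Matrix (Fin n × Fin n) (Fin n × Fin n) ℝ)
    (hK : ∀ Z : Matrix (Fin n) (Fin n) ℝ, K.mulVec (vecOp Z) = vecOp Zᵀ)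
    (A : Matrix (Fin n × Fin n) (triuIdx n M) ℝ)
    (hA : A = Matrix.kroneckerMap (· * ·)
        (Matrix.diagonal fun i => Real.sqrt (piv i))
        (Matrix.diagonal fun i => (Real.sqrt (piv i))⁻¹) * (1 + K) * selOp n M)
    (Q : Matrix (triuIdx n M) (triuIdx n M) ℝ)
    (hQ : Q = Aᵀ * A) :
    Q.PosDef ∧
    ∃ m : ℝ, 0 < m ∧ ∀ c x z : triuIdx n M → ℝ, ∀ t ∈ Set.Icc (0 : ℝ) 1,
      (1 / 2) * ((t • x + (1 - t) • z) ⬝ᵥ Q.mulVec (t • x + (1 - t) • z)) +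
          c ⬝ᵥ (t • x + (1 - t) • z)
        ≤ t * ((1 / 2) * (x ⬝ᵥ Q.mulVec x) + c ⬝ᵥ x) +
            (1 - t) * ((1 / 2) * (z ⬝ᵥ Q.mulVec z) + c ⬝ᵥ z) -
            m / 2 * (t * (1 - t)) * ∑ k, (x k - z k) ^ 2 := by
  have hsqrt : ∀ i, Real.sqrt (piv i) ≠ 0 := fun i => (Real.sqrt_pos.mpr (hpos i)).ne'
  have hinj : Function.Injective A.mulVec := hA ▸ injective_mulVec_mul_selOp
    (injective_mulVec_kronecker_diagonal hsqrt fun i => inv_ne_zero (hsqrt i)) hK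
  obtain ⟨m, hm, hbound⟩ := exists_pos_mul_sum_sq_le_of_injective hinj
  refine ⟨?_, m, hm, fun c x z t ht => ?_⟩
  · simpa [hQ] using PosDef.conjTranspose_mul_self A hinj
  · exact quadratic_strong_convexity (hQ ▸ hbound) c x z ht

/-- The Hessian `Q = ((D_π̂ ⊗ D_π̂⁻¹)(I+K)Π)ᵀ (D_π̂ ⊗ D_π̂⁻¹)(I+K)Π`
is symmetric positive definite; consequently the quadratic objective
`y ↦ ½ yᵀQy + cᵀy` is strongly convex for every `c`. -/
theorem qp_hessian_positive_definite
    (n : ℕ) (piv : Fin n → ℝ)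
    (hpos : ∀ i, 0 < piv i) (hsum : ∑ i, piv i = 1)
    (M : Matrix (Fin n) (Fin n) ℝ)
    (hM01 : ∀ i j, M i j = 0 ∨ M i j = 1)
    (hMirr : ∀ i j, ∃ k : ℕ, 0 < (M ^ k) i j)
    (hMsymm : M.IsSymm)
    (hMdiag : ∀ i, M i i = 1)
    (K : Matrix (Fin n × Fin n) (Fin n × Fin n) ℝ)
    (hK : ∀ Z : Matrix (Fin n) (Fin n) ℝ, K.mulVec (vecOp Z) = vecOp Zᵀ)
    (A : Matrix (Fin n × Fin n) (triuIdx n M) ℝ)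
    (hA : A = Matrix.kroneckerMap (· * ·)
        (Matrix.diagonal fun i => Real.sqrt (piv i))
        (Matrix.diagonal fun i => (Real.sqrt (piv i))⁻¹) * (1 + K) * selOp n M)
    (Q : Matrix (triuIdx n M) (triuIdx n M) ℝ)
    (hQ : Q = Aᵀ * A) :
    Q.PosDef ∧
    ∃ m : ℝ, 0 < m ∧ ∀ c x z : triuIdx n M → ℝ, ∀ t ∈ Set.Icc (0 : ℝ) 1,
      (1 / 2) * ((t • x + (1 - t) • z) ⬝ᵥ Q.mulVec (t • x + (1 - t) • z)) +
          c ⬝ᵥ (t • x + (1 - t) • z)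
        ≤ t * ((1 / 2) * (x ⬝ᵥ Q.mulVec x) + c ⬝ᵥ x) +
            (1 - t) * ((1 / 2) * (z ⬝ᵥ Q.mulVec z) + c ⬝ᵥ z) -
            m / 2 * (t * (1 - t)) * ∑ k, (x k - z k) ^ 2 :=
  qp_hessian_positive_definite_general n piv hpos M K hK A hA Q hQ
end
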